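/- If H is cocommutative, then the twisted action of an H-equivariant Lie algebra g on an equivariant g-module M is a braided representation of the twisted bracket: ξ₁ ⋅⋆ (ξ₂ ⋅⋆ m) − Σ (Rₖ • ξ₂) ⋅⋆ ((Rᵏ • ξ₁) ⋅⋆ m) = [ξ₁, ξ₂]⋆ ⋅⋆ m for all ξ₁, ξ₂ ∈ g and m ∈ M, where R⁻¹ = Σ Rₖ ⊗ Rᵏ is the inverse of the R-matrix. -/

import Mathlib

/-!
Write `nestedAct ξ η m` for the functional `u ↦ Σ ρ (u₁ • ξ) (ρ (u₂ • η) (u₃ • m))` on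
`H ⊗ H ⊗ H`. All three terms of the identity are values of it: `ξ₁ ⋅⋆ (ξ₂ ⋅⋆ m)` at
`Y = (id ⊗ Δ)(F⁻¹) · F⁻¹₂₃`; the braided term, with `ξ₁, ξ₂` exchanged, at `Y · (R⁻¹)₁₂`;
and, by equivariance of the bracket and the Lie module property, `[ξ₁, ξ₂]⋆ ⋅⋆ m` at `X`
minus the exchanged functional at `τ₁₂ X`, where `X = (Δ ⊗ id)(F⁻¹) · F⁻¹₁₂`.
Inverting the cocycle condition gives `X = Y`, and since `R⁻¹ = F · τ(F⁻¹)`,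
`X · (R⁻¹)₁₂ = (Δ ⊗ id)(F⁻¹) · τ(F⁻¹)₁₂`, which equals `τ₁₂ X` because cocommutativity makes
`(Δ ⊗ id)(F⁻¹)` symmetric in its first two legs.
-/

open TensorProduct

noncomputable section

/-- The generic "twisted bilinear map": given `H`-actions on `A` and `B`, a bilinear map
`mu : A →ₗ B →ₗ C` and an element `T = Σ T₁ ⊗ T₂` of `H ⊗ H`, this is the bilinear map
`(a, b) ↦ Σ mu (T₁ • a) (T₂ • b)`. -/
def twistBil {k H A B C : Type*} [CommRing k] [Ring H] [Algebra k H]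
    [AddCommGroup A] [Module k A] [AddCommGroup B] [Module k B]
    [AddCommGroup C] [Module k C]
    (actA : H →ₗ[k] A →ₗ[k] A) (actB : H →ₗ[k] B →ₗ[k] B)
    (mu : A →ₗ[k] B →ₗ[k] C) (T : H ⊗[k] H) : A →ₗ[k] B →ₗ[k] C :=
  TensorProduct.curry (TensorProduct.lift mu ∘ₗ
    (TensorProduct.homTensorHomMap (RingHom.id k) A B A B ∘ₗ TensorProduct.map actA actB) T)

/-- A Drinfel'd twist on a Hopf algebra `H`: an invertible element `F` of `H ⊗ H`
(with specified inverse `Finv`) satisfying the 2-cocycle condition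
`(F ⊗ 1)·((Δ ⊗ id)(F)) = (1 ⊗ F)·((id ⊗ Δ)(F))` and the normalization condition
`(ε ⊗ id)(F) = 1 = (id ⊗ ε)(F)`. -/
def IsDrinfeldTwist {k H : Type*} [CommRing k] [Ring H] [HopfAlgebra k H]
    (F Finv : H ⊗[k] H) : Prop :=
  F * Finv = 1 ∧ Finv * F = 1 ∧
  TensorProduct.map LinearMap.id ((TensorProduct.mk k H H).flip 1) F *
      TensorProduct.assoc k H H H ((Coalgebra.comul (R := k) (A := H)).rTensor H F) =
    ((1 : H) ⊗ₜ[k] F) * (Coalgebra.comul (R := k) (A := H)).lTensor H F ∧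
  TensorProduct.lid k H ((Coalgebra.counit (R := k) (A := H)).rTensor H F) = 1 ∧
  TensorProduct.rid k H ((Coalgebra.counit (R := k) (A := H)).lTensor H F) = 1

/-- The twisted comultiplication `Δ_F(x) := F · Δ(x) · F⁻¹`, as a `k`-linear map. -/
def comulF {k H : Type*} [CommRing k] [Ring H] [HopfAlgebra k H]
    (F Finv : H ⊗[k] H) : H →ₗ[k] H ⊗[k] H :=
  LinearMap.mulRight k Finv ∘ₗ LinearMap.mulLeft k F ∘ₗ Coalgebra.comul (R := k)

/-- The `R`-matrix `R := τ(F) · F⁻¹` of a Drinfel'd twist. -/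
def Rmat {k H : Type*} [CommRing k] [Ring H] [Algebra k H]
    (F Finv : H ⊗[k] H) : H ⊗[k] H :=
  TensorProduct.comm k H H F * Finv

/-- The inverse `R⁻¹ = F · τ(F⁻¹)` of the `R`-matrix of a Drinfel'd twist; written
`R⁻¹ = Σ Rₖ ⊗ Rᵏ`. -/
def RmatInv {k H : Type*} [CommRing k] [Ring H] [Algebra k H]
    (F Finv : H ⊗[k] H) : H ⊗[k] H :=
  F * TensorProduct.comm k H H Finv

/-- `H` is cocommutative if `τ ∘ Δ = Δ`. -/
def IsCocommutative (k H : Type*) [CommRing k] [Ring H] [HopfAlgebra k H] : Prop :=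
  ∀ x : H, TensorProduct.comm k H H (Coalgebra.comul (R := k) x) = Coalgebra.comul (R := k) x

/-- For `T = Σ T₁ ⊗ T₂ ∈ H ⊗ H`, the element `T₁₂ = Σ T₁ ⊗ T₂ ⊗ 1` of `H ⊗ H ⊗ H`. -/
def leg12 {k H : Type*} [CommRing k] [Ring H] [Algebra k H]
    (T : H ⊗[k] H) : H ⊗[k] (H ⊗[k] H) :=
  TensorProduct.map LinearMap.id ((TensorProduct.mk k H H).flip 1) T

/-- For `T = Σ T₁ ⊗ T₂ ∈ H ⊗ H`, the element `T₁₃ = Σ T₁ ⊗ 1 ⊗ T₂` of `H ⊗ H ⊗ H`. -/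
def leg13 {k H : Type*} [CommRing k] [Ring H] [Algebra k H]
    (T : H ⊗[k] H) : H ⊗[k] (H ⊗[k] H) :=
  TensorProduct.map LinearMap.id (TensorProduct.mk k H H 1) T

/-- For `T ∈ H ⊗ H`, the element `T₂₃ = 1 ⊗ T` of `H ⊗ H ⊗ H`. -/
def leg23 {k H : Type*} [CommRing k] [Ring H] [Algebra k H]
    (T : H ⊗[k] H) : H ⊗[k] (H ⊗[k] H) :=
  (1 : H) ⊗ₜ[k] T

/-- A (k-bilinear) left `H`-action: `(gh) • a = g • (h • a)` and `1 • a = a`. -/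
def IsHAction {k H A : Type*} [CommRing k] [Ring H] [Algebra k H]
    [AddCommGroup A] [Module k A] (act : H →ₗ[k] A →ₗ[k] A) : Prop :=
  (∀ (g h : H) (a : A), act (g * h) a = act g (act h a)) ∧ ∀ a : A, act 1 a = a

/-- An `H`-module algebra structure on `A`: a left `H`-action such that
`h • (a·b) = Σ (h⁽¹⁾ • a)·(h⁽²⁾ • b)` and `h • 1 = ε(h)·1`. -/
def IsModuleAlgebra {k H A : Type*} [CommRing k] [Ring H] [HopfAlgebra k H]
    [Ring A] [Algebra k A] (act : H →ₗ[k] A →ₗ[k] A) : Prop :=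
  IsHAction act ∧
  (∀ (h : H) (a b : A),
    act h (a * b) = twistBil act act (LinearMap.mul k A) (Coalgebra.comul (R := k) h) a b) ∧
  ∀ h : H, act h 1 = Coalgebra.counit (R := k) h • (1 : A)

/-- The star product `a ⋆ b := Σ (f̄ᵏ • a)·(f̄ₖ • b)` on an `H`-module algebra,
as a bilinear map; here `Finv = Σ f̄ᵏ ⊗ f̄ₖ` is the inverse of the twist. -/
def starBil {k H A : Type*} [CommRing k] [Ring H] [Algebra k H]
    [Ring A] [Algebra k A] (act : H →ₗ[k] A →ₗ[k] A) (Finv : H ⊗[k] H) :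
    A →ₗ[k] A →ₗ[k] A :=
  twistBil act act (LinearMap.mul k A) Finv

/-- The Lie bracket of a Lie algebra `g` over `k`, as a bilinear map. -/
def lieBil (k g : Type*) [CommRing k] [LieRing g] [LieAlgebra k g] : g →ₗ[k] g →ₗ[k] g :=
  LinearMap.mk₂ k (fun x y => ⁅x, y⁆) add_lie smul_lie lie_add lie_smul

/-- An `H`-equivariant Lie algebra structure: a left `H`-action on the Lie algebra `g`
such that `h • ⁅a, b⁆ = Σ ⁅h⁽¹⁾ • a, h⁽²⁾ • b⁆`. -/
def IsEquivLieAlgebra {k H g : Type*} [CommRing k] [Ring H] [HopfAlgebra k H]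
    [LieRing g] [LieAlgebra k g] (act : H →ₗ[k] g →ₗ[k] g) : Prop :=
  IsHAction act ∧
  ∀ (h : H) (a b : g),
    act h ⁅a, b⁆ = twistBil act act (lieBil k g) (Coalgebra.comul (R := k) h) a b

/-- The twisted bracket `[a, b]⋆ := Σ ⁅f̄ᵏ • a, f̄ₖ • b⁆` on an `H`-equivariant Lie algebra. -/
def lieStar {k H g : Type*} [CommRing k] [Ring H] [Algebra k H]
    [LieRing g] [LieAlgebra k g] (act : H →ₗ[k] g →ₗ[k] g) (Finv : H ⊗[k] H) :
    g →ₗ[k] g →ₗ[k] g :=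
  twistBil act act (lieBil k g) Finv

/-- The twisted antipode `S_F(x) := u · S(x) · u⁻¹` with `u := Σ fᵏ·S(fₖ)` and
`u⁻¹ = Σ S(f̄ᵏ)·f̄ₖ`. -/
def antipodeF {k H : Type*} [CommRing k] [Ring H] [HopfAlgebra k H]
    (F Finv : H ⊗[k] H) : H →ₗ[k] H :=
  LinearMap.mulRight k
      (LinearMap.mul' k H ((HopfAlgebra.antipode (R := k)).rTensor H Finv)) ∘ₗ
    LinearMap.mulLeft k
      (LinearMap.mul' k H ((HopfAlgebra.antipode (R := k)).lTensor H F)) ∘ₗ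
    HopfAlgebra.antipode (R := k)

end

open Algebra.TensorProduct (includeLeft includeRight)

theorem mul_rev_eq_of_mul_eq {N : Type*} [Monoid N] {a b c d a' b' c' d' : N}
    (ha : a' * a = 1) (hb : b' * b = 1) (hc : c * c' = 1) (hd : d * d' = 1)
    (h : a * b = c * d) : b' * a' = d' * c' :=
  calc b' * a' = b' * a' * (c * (d * d') * c') := by rw [hd, mul_one, hc, mul_one]
    _ = b' * (a' * a) * b * d' * c' := by rw [← mul_assoc c, ← h]; simp only [mul_assoc]
    _ = d' * c' := by rw [ha, mul_one, hb, one_mul]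

section TensorCube

variable {k H : Type*} [CommRing k] [Ring H]

section Bialgebra

variable (k H) [Bialgebra k H]

def comulTensorId : H ⊗[k] H →ₐ[k] H ⊗[k] (H ⊗[k] H) :=
  (Algebra.TensorProduct.assoc k k k H H H).toAlgHom.comp
    (Algebra.TensorProduct.rTensor H (Bialgebra.comulAlgHom k H))

def idTensorComul : H ⊗[k] H →ₐ[k] H ⊗[k] (H ⊗[k] H) :=
  Algebra.TensorProduct.lTensor H (Bialgebra.comulAlgHom k H)

def leg12Hom : H ⊗[k] H →ₐ[k] H ⊗[k] (H ⊗[k] H) :=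
  Algebra.TensorProduct.lTensor H includeLeft

variable {k H}

theorem comulTensorId_tmul (s t : H) :
    comulTensorId k H (s ⊗ₜ t) = TensorProduct.assoc k H H H (Coalgebra.comul s ⊗ₜ t) :=
  rfl

theorem leftComm_leg12Hom (T : H ⊗[k] H) :
    Algebra.TensorProduct.leftComm k H H H (leg12Hom k H T) =
      leg12Hom k H (Algebra.TensorProduct.comm k H H T) := by
  induction T using TensorProduct.induction_on with
  | zero => simp
  | tmul s t => rfl
  | add x y hx hy => simp only [map_add, hx, hy]

end Bialgebra

variable [HopfAlgebra k H] {F Finv : H ⊗[k] H}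

theorem leftComm_comulTensorId (hcc : IsCocommutative k H) (T : H ⊗[k] H) :
    Algebra.TensorProduct.leftComm k H H H (comulTensorId k H T) = comulTensorId k H T := by
  induction T using TensorProduct.induction_on with
  | zero => simp
  | tmul s t =>
    rw [comulTensorId_tmul]
    conv_rhs => rw [← hcc s]
    induction Coalgebra.comul (R := k) s using TensorProduct.induction_on with
    | zero => simp
    | tmul a b => rfl
    | add x y hx hy => simp only [TensorProduct.add_tmul, map_add, hx, hy]
  | add x y hx hy => simp only [map_add, hx, hy]

theorem IsDrinfeldTwist.cocycle (hF : IsDrinfeldTwist F Finv) :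
    leg12Hom k H F * comulTensorId k H F = includeRight F * idTensorComul k H F :=
  hF.2.2.1

theorem IsDrinfeldTwist.inv_cocycle (hF : IsDrinfeldTwist F Finv) :
    idTensorComul k H Finv * includeRight Finv =
      comulTensorId k H Finv * leg12Hom k H Finv := by
  have hinv (f : H ⊗[k] H →ₐ[k] H ⊗[k] (H ⊗[k] H)) :
      f Finv * f F = 1 ∧ f F * f Finv = 1 := by
    simp only [← map_mul, hF.1, hF.2.1, map_one, and_self]
  exact (mul_rev_eq_of_mul_eq (hinv _).1 (hinv _).1 (hinv _).2 (hinv _).2 hF.cocycle).symm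

theorem mul_leg12Hom_RmatInv (hF : Finv * F = 1) (hcc : IsCocommutative k H) :
    comulTensorId k H Finv * leg12Hom k H Finv * leg12Hom k H (RmatInv F Finv) =
      Algebra.TensorProduct.leftComm k H H H (comulTensorId k H Finv * leg12Hom k H Finv) :=
  calc comulTensorId k H Finv * leg12Hom k H Finv * leg12Hom k H (RmatInv F Finv)
      = comulTensorId k H Finv * leg12Hom k H (Finv * F * TensorProduct.comm k H H Finv) := by
        rw [RmatInv, mul_assoc Finv, map_mul (leg12Hom k H) Finv, mul_assoc]
    _ = Algebra.TensorProduct.leftComm k H H H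
          (comulTensorId k H Finv * leg12Hom k H Finv) := by
        rw [hF, one_mul, map_mul, leftComm_comulTensorId hcc, leftComm_leg12Hom]; rfl

end TensorCube

section TwistBil

variable {k H A B C : Type*} [CommRing k] [Ring H]
  [AddCommGroup A] [Module k A] [AddCommGroup B] [Module k B] [AddCommGroup C] [Module k C]

section Algebra

variable [Algebra k H] {actA : H →ₗ[k] A →ₗ[k] A} {actB : H →ₗ[k] B →ₗ[k] B}
  {mu : A →ₗ[k] B →ₗ[k] C}

@[simp] theorem twistBil_tmul (s t : H) (a : A) (b : B) :
    twistBil actA actB mu (s ⊗ₜ t) a b = mu (actA s a) (actB t b) := by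
  simp [twistBil]

@[simp] theorem twistBil_add (T T' : H ⊗[k] H) (a : A) (b : B) :
    twistBil actA actB mu (T + T') a b
      = twistBil actA actB mu T a b + twistBil actA actB mu T' a b := by
  simp [twistBil]

@[simp] theorem twistBil_zero (a : A) (b : B) : twistBil actA actB mu 0 a b = 0 := by
  simp [twistBil]

theorem twistBil_mul_tmul (hA : IsHAction actA) (hB : IsHAction actB)
    (T : H ⊗[k] H) (s t : H) (a : A) (b : B) :
    twistBil actA actB mu (T * (s ⊗ₜ t)) a b = twistBil actA actB mu T (actA s a) (actB t b) := by
  induction T using TensorProduct.induction_on with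
  | zero => simp
  | tmul x y => simp [hA.1, hB.1]
  | add x y hx hy => simp [add_mul, hx, hy]

end Algebra

variable [Bialgebra k H]

def IsEquivariantBil (actA : H →ₗ[k] A →ₗ[k] A) (actB : H →ₗ[k] B →ₗ[k] B)
    (actC : H →ₗ[k] C →ₗ[k] C) (mu : A →ₗ[k] B →ₗ[k] C) : Prop :=
  ∀ (h : H) (a : A) (b : B),
    actC h (mu a b) = twistBil actA actB mu (Coalgebra.comul (R := k) h) a b

variable {actA : H →ₗ[k] A →ₗ[k] A} {actB : H →ₗ[k] B →ₗ[k] B} {mu : A →ₗ[k] B →ₗ[k] C}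

theorem act_twistBil {actC : H →ₗ[k] C →ₗ[k] C} (hA : IsHAction actA) (hB : IsHAction actB)
    (hmu : IsEquivariantBil actA actB actC mu) (h : H) (T : H ⊗[k] H) (a : A) (b : B) :
    actC h (twistBil actA actB mu T a b) =
      twistBil actA actB mu (Coalgebra.comul (R := k) h * T) a b := by
  induction T using TensorProduct.induction_on with
  | zero => simp
  | tmul s t => rw [twistBil_tmul, hmu, twistBil_mul_tmul hA hB]
  | add x y hx hy => simp [mul_add, hx, hy]

end TwistBil

section EquivariantModule

variable {k H g M : Type*} [CommRing k] [Ring H] [LieRing g] [LieAlgebra k g]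
  [AddCommGroup M] [Module k M]

section Bialgebra

variable [Bialgebra k H] {actg : H →ₗ[k] g →ₗ[k] g} {actM : H →ₗ[k] M →ₗ[k] M}
  {ρ : g →ₗ[k] M →ₗ[k] M}

variable (actg actM ρ) in
def nestedAct (ξ η : g) (m : M) : H ⊗[k] (H ⊗[k] H) →ₗ[k] M :=
  TensorProduct.lift ((ρ ∘ₗ actg.flip ξ).compl₂
    (TensorProduct.lift ((ρ ∘ₗ actg.flip η).compl₂ (actM.flip m))))

@[simp] theorem nestedAct_tmul_tmul (ξ η : g) (m : M) (a b c : H) :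
    nestedAct actg actM ρ ξ η m (a ⊗ₜ (b ⊗ₜ c)) = ρ (actg a ξ) (ρ (actg b η) (actM c m)) := by
  simp [nestedAct]

theorem nestedAct_tmul (ξ η : g) (m : M) (a : H) (T : H ⊗[k] H) :
    nestedAct actg actM ρ ξ η m (a ⊗ₜ T) = ρ (actg a ξ) (twistBil actg actM ρ T η m) := by
  induction T using TensorProduct.induction_on with
  | zero => simp
  | tmul b c => simp
  | add x y hx hy => simp [TensorProduct.tmul_add, hx, hy]

theorem nestedAct_mul_leg12Hom (hg : IsHAction actg) (ξ η : g) (m : M)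
    (u : H ⊗[k] (H ⊗[k] H)) (r r' : H) :
    nestedAct actg actM ρ ξ η m (u * leg12Hom k H (r ⊗ₜ r')) =
      nestedAct actg actM ρ (actg r ξ) (actg r' η) m u := by
  induction u using TensorProduct.induction_on with
  | zero => simp
  | tmul a T =>
    induction T using TensorProduct.induction_on with
    | zero => simp
    | tmul b c => simp [leg12Hom, hg.1]
    | add x y hx hy => simp_all [TensorProduct.tmul_add, add_mul]
  | add x y hx hy => simp [add_mul, hx, hy]

theorem twistBil_twistBil (hg : IsHAction actg) (hM : IsHAction actM)
    (hequiv : IsEquivariantBil actg actM actM ρ) (S T : H ⊗[k] H) (ξ η : g) (m : M) :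
    twistBil actg actM ρ S ξ (twistBil actg actM ρ T η m) =
      nestedAct actg actM ρ ξ η m (idTensorComul k H S * includeRight T) := by
  induction S using TensorProduct.induction_on with
  | zero => simp
  | tmul s t =>
    rw [twistBil_tmul, act_twistBil hg hM hequiv]
    simp [idTensorComul, nestedAct_tmul]
  | add x y hx hy => simp [add_mul, hx, hy]

theorem twistBil_compl₂_flip (hg : IsHAction actg) (hM : IsHAction actM)
    (hequiv : IsEquivariantBil actg actM actM ρ) (S T W : H ⊗[k] H) (ξ η : g) (m : M) :
    twistBil actg actg ((twistBil actg actM ρ S).compl₂ ((twistBil actg actM ρ T).flip m))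
        W η ξ =
      nestedAct actg actM ρ η ξ m (idTensorComul k H S * includeRight T * leg12Hom k H W) := by
  induction W using TensorProduct.induction_on with
  | zero => simp
  | tmul r r' =>
    rw [nestedAct_mul_leg12Hom hg, ← twistBil_twistBil hg hM hequiv]
    rfl
  | add x y hx hy => simp [mul_add, hx, hy]

end Bialgebra

variable [HopfAlgebra k H] {actg : H →ₗ[k] g →ₗ[k] g} {actM : H →ₗ[k] M →ₗ[k] M}
  {ρ : g →ₗ[k] M →ₗ[k] M}

theorem twistBil_lie (hg : IsEquivLieAlgebra actg)
    (hlie : ∀ (ξ₁ ξ₂ : g) (m : M), ρ ⁅ξ₁, ξ₂⁆ m = ρ ξ₁ (ρ ξ₂ m) - ρ ξ₂ (ρ ξ₁ m))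
    (S : H ⊗[k] H) (ξ η : g) (m : M) :
    twistBil actg actM ρ S ⁅ξ, η⁆ m =
      nestedAct actg actM ρ ξ η m (comulTensorId k H S) -
        nestedAct actg actM ρ η ξ m
          (Algebra.TensorProduct.leftComm k H H H (comulTensorId k H S)) := by
  induction S using TensorProduct.induction_on with
  | zero => simp
  | tmul s t =>
    rw [twistBil_tmul, hg.2, comulTensorId_tmul]
    induction Coalgebra.comul (R := k) s using TensorProduct.induction_on with
    | zero => simp
    | tmul a b => simp [lieBil, hlie]
    | add x y hx hy =>
      simp only [twistBil_add, map_add, LinearMap.add_apply, TensorProduct.add_tmul, hx, hy]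
      abel
  | add x y hx hy =>
    simp only [twistBil_add, map_add, hx, hy]
    abel

theorem twistBil_lieStar (hg : IsEquivLieAlgebra actg)
    (hlie : ∀ (ξ₁ ξ₂ : g) (m : M), ρ ⁅ξ₁, ξ₂⁆ m = ρ ξ₁ (ρ ξ₂ m) - ρ ξ₂ (ρ ξ₁ m))
    (S T : H ⊗[k] H) (ξ η : g) (m : M) :
    twistBil actg actM ρ S (lieStar actg T ξ η) m =
      nestedAct actg actM ρ ξ η m (comulTensorId k H S * leg12Hom k H T) -
        nestedAct actg actM ρ η ξ m
          (Algebra.TensorProduct.leftComm k H H H (comulTensorId k H S * leg12Hom k H T)) := by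
  induction T using TensorProduct.induction_on with
  | zero => simp [lieStar]
  | tmul t t' =>
    rw [map_mul (Algebra.TensorProduct.leftComm k H H H), leftComm_leg12Hom,
      Algebra.TensorProduct.comm_tmul,
      nestedAct_mul_leg12Hom hg.1, nestedAct_mul_leg12Hom hg.1,
      ← twistBil_lie hg hlie]
    simp [lieStar, lieBil]
  | add x y hx hy =>
    simp only [lieStar] at hx hy ⊢
    simp only [twistBil_add, map_add, LinearMap.add_apply, mul_add, hx, hy]
    abel

end EquivariantModule

/-- If `H` is cocommutative, then the twisted action of an `H`-equivariant Lie
algebra `g` on an equivariant `g`-module `M` is a braided representation of the twisted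
bracket: `ξ₁ ⋅⋆ (ξ₂ ⋅⋆ m) − Σ (Rₖ • ξ₂) ⋅⋆ ((Rᵏ • ξ₁) ⋅⋆ m) = [ξ₁, ξ₂]⋆ ⋅⋆ m`. -/
theorem twisted_action_braided_rep {k H g M : Type*} [CommRing k] [Ring H] [HopfAlgebra k H]
    [LieRing g] [LieAlgebra k g] [AddCommGroup M] [Module k M]
    (actg : H →ₗ[k] g →ₗ[k] g) (hg : IsEquivLieAlgebra actg)
    (actM : H →ₗ[k] M →ₗ[k] M) (hM : IsHAction actM)
    (ρ : g →ₗ[k] M →ₗ[k] M)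
    (hlie : ∀ (ξ₁ ξ₂ : g) (m : M), ρ ⁅ξ₁, ξ₂⁆ m = ρ ξ₁ (ρ ξ₂ m) - ρ ξ₂ (ρ ξ₁ m))
    (hequiv : ∀ (h : H) (ξ : g) (m : M),
      actM h (ρ ξ m) = twistBil actg actM ρ (Coalgebra.comul (R := k) h) ξ m)
    (F Finv : H ⊗[k] H) (hF : IsDrinfeldTwist F Finv) (hcc : IsCocommutative k H) :
    ∀ (ξ₁ ξ₂ : g) (m : M),
      twistBil actg actM ρ Finv ξ₁ (twistBil actg actM ρ Finv ξ₂ m)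
        - twistBil actg actg
            ((twistBil actg actM ρ Finv).compl₂ ((twistBil actg actM ρ Finv).flip m))
            (RmatInv F Finv) ξ₂ ξ₁
        = twistBil actg actM ρ Finv (lieStar actg Finv ξ₁ ξ₂) m := by
  intro ξ₁ ξ₂ m
  rw [twistBil_twistBil hg.1 hM hequiv, twistBil_compl₂_flip hg.1 hM hequiv,
    twistBil_lieStar hg hlie, hF.inv_cocycle, mul_leg12Hom_RmatInv hF.2.1 hcc]
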